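/- arXiv:1602.04134 — 9 statements merged into one kernel-verified Lean document; each statement's English description precedes it below -/
import Mathlib

section
/- For a quasigroup Q: Q₁ = Q if and only if Q₂ = Q₃, if and only if Q₄ = Q₅ (equality of parastrophe operations). -/
def IsQuasigroup {Q : Type*} (m : Q → Q → Q) : Prop :=
  (∀ a, Function.Bijective (fun x => m a x)) ∧ (∀ a, Function.Bijective (fun x => m x a))

def Isotopic {Q : Type*} (m₁ m₂ : Q → Q → Q) : Prop :=
  ∃ α β γ : Q → Q, Function.Bijective α ∧ Function.Bijective β ∧ Function.Bijective γ ∧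
    ∀ x y, m₂ (α x) (β y) = γ (m₁ x y)

def AntiIsotopic {Q : Type*} (m₁ m₂ : Q → Q → Q) : Prop :=
  ∃ α β γ : Q → Q, Function.Bijective α ∧ Function.Bijective β ∧ Function.Bijective γ ∧
    ∀ x y, m₂ (α x) (β y) = γ (m₁ y x)

theorem stmt_3 {Q : Type*} (m p1 p2 p3 p4 p5 : Q → Q → Q) (hq : IsQuasigroup m)
    (h1 : ∀ x y z, p1 x y = z ↔ m x z = y)
    (h2 : ∀ x y z, p2 x y = z ↔ m z y = x)
    (h3 : ∀ x y z, p3 x y = z ↔ m z x = y)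
    (h4 : ∀ x y z, p4 x y = z ↔ m y z = x)
    (h5 : ∀ x y, p5 x y = m y x) :
    (p1 = m ↔ p2 = p3) ∧ (p2 = p3 ↔ p4 = p5) := by
  have C1 : p1 = m ↔ ∀ a b, m a (m a b) = b := by
    constructor
    · intro h a b
      exact (h1 a b (m a b)).mp (by rw [h])
    · intro h
      funext x y
      exact (h1 x y (m x y)).mpr (h x y)
  have C2 : p2 = p3 ↔ ∀ a b, m a (m a b) = b := by
    constructor
    · intro h a b
      have hpa : p3 b (m a b) = a := (h3 b (m a b) a).mpr rfl
      have : p2 b (m a b) = a := by rw [h, hpa]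
      exact (h2 b (m a b) a).mp this
    · intro h
      funext x y
      have hy : m (p3 x y) x = y := (h3 x y (p3 x y)).mp rfl
      refine (h2 x y (p3 x y)).mpr ?_
      calc m (p3 x y) y = m (p3 x y) (m (p3 x y) x) := by rw [hy]
        _ = x := h _ _
  have C4 : p4 = p5 ↔ ∀ a b, m a (m a b) = b := by
    constructor
    · intro h a b
      have : p4 b a = m a b := by rw [h, h5]
      exact (h4 b a (m a b)).mp this
    · intro h
      funext x y
      rw [h5]
      exact (h4 x y (m y x)).mpr (h y x)
  exact ⟨C1.trans C2.symm, C2.trans C4.symm⟩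
end

section
/- For a quasigroup Q: Q₂ = Q if and only if Q₁ = Q₄, if and only if Q₃ = Q₅ (equality of parastrophe operations). -/
theorem stmt_4 {Q : Type*} (m p1 p2 p3 p4 p5 : Q → Q → Q) (hq : IsQuasigroup m)
    (h1 : ∀ x y z, p1 x y = z ↔ m x z = y)
    (h2 : ∀ x y z, p2 x y = z ↔ m z y = x)
    (h3 : ∀ x y z, p3 x y = z ↔ m z x = y)
    (h4 : ∀ x y z, p4 x y = z ↔ m y z = x)
    (h5 : ∀ x y, p5 x y = m y x) :
    (p2 = m ↔ p1 = p4) ∧ (p1 = p4 ↔ p3 = p5) := by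
  have key2 : p2 = m ↔ ∀ a b, m (m a b) b = a := by
    constructor
    · intro hp a b
      exact (h2 a b (m a b)).mp (by rw [hp])
    · intro K
      funext a b
      exact (h2 a b (m a b)).mpr (K a b)
  have key1 : p1 = p4 ↔ ∀ a b, m (m a b) b = a := by
    constructor
    · intro hp a b
      have hz : p1 a (m a b) = b := (h1 a (m a b) b).mpr rfl
      have : p4 a (m a b) = b := by rw [← hp]; exact hz
      exact (h4 a (m a b) b).mp this
    · intro K
      funext x y
      have hz : m x (p1 x y) = y := (h1 x y (p1 x y)).mp rfl
      have hk := K x (p1 x y)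
      rw [hz] at hk
      exact ((h4 x y (p1 x y)).mpr hk).symm
  have key3 : p3 = p5 ↔ ∀ a b, m (m a b) b = a := by
    constructor
    · intro hp a b
      have : p3 b a = m a b := by rw [hp, h5]
      exact (h3 b a (m a b)).mp this
    · intro K
      funext x y
      rw [h5]
      exact (h3 x y (m y x)).mpr (K y x)
  exact ⟨key2.trans key1.symm, key1.trans key3.symm⟩
end

section
/- For a quasigroup Q the following are equivalent: (i) Q is anti-isotopic to itself; (ii) Q is isotopic to Q₅; (iii) Q₁ is isotopic to Q₃; (iv) Q₂ is isotopic to Q₄. -/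
lemma aux13 {Q : Type*} (m p1 p3 p5 : Q → Q → Q)
    (h1 : ∀ x y z, p1 x y = z ↔ m x z = y)
    (h3 : ∀ x y z, p3 x y = z ↔ m z x = y)
    (h5 : ∀ x y, p5 x y = m y x) :
    Isotopic m p5 ↔ Isotopic p1 p3 := by
  constructor
  · rintro ⟨α, β, γ, hα, hβ, hγ, h⟩
    refine ⟨α, γ, β, hα, hγ, hβ, fun x y => ?_⟩
    rw [h3]
    have hz : m x (p1 x y) = y := (h1 x y _).mp rfl
    have := h x (p1 x y)
    rw [h5] at this
    rw [this, hz]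
  · rintro ⟨α, β, γ, hα, hβ, hγ, h⟩
    refine ⟨α, γ, β, hα, hγ, hβ, fun x z => ?_⟩
    rw [h5]
    have hp : p1 x (m x z) = z := (h1 x (m x z) z).mpr rfl
    have := h x (m x z)
    rw [hp] at this
    exact (h3 (α x) (β (m x z)) (γ z)).mp this

lemma aux24 {Q : Type*} (m p2 p4 p5 : Q → Q → Q)
    (h2 : ∀ x y z, p2 x y = z ↔ m z y = x)
    (h4 : ∀ x y z, p4 x y = z ↔ m y z = x)
    (h5 : ∀ x y, p5 x y = m y x) :
    Isotopic m p5 ↔ Isotopic p2 p4 := by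
  constructor
  · rintro ⟨α, β, γ, hα, hβ, hγ, h⟩
    refine ⟨γ, β, α, hγ, hβ, hα, fun x y => ?_⟩
    rw [h4]
    have hz : m (p2 x y) y = x := (h2 x y _).mp rfl
    have := h (p2 x y) y
    rw [h5] at this
    rw [this, hz]
  · rintro ⟨α, β, γ, hα, hβ, hγ, h⟩
    refine ⟨γ, β, α, hγ, hβ, hα, fun z y => ?_⟩
    rw [h5]
    have hp : p2 (m z y) y = z := (h2 (m z y) y z).mpr rfl
    have := h (m z y) y
    rw [hp] at this
    exact (h4 (α (m z y)) (β y) (γ z)).mp this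

theorem stmt_8 {Q : Type*} (m p1 p2 p3 p4 p5 : Q → Q → Q) (hq : IsQuasigroup m)
    (h1 : ∀ x y z, p1 x y = z ↔ m x z = y)
    (h2 : ∀ x y z, p2 x y = z ↔ m z y = x)
    (h3 : ∀ x y z, p3 x y = z ↔ m z x = y)
    (h4 : ∀ x y z, p4 x y = z ↔ m y z = x)
    (h5 : ∀ x y, p5 x y = m y x) :
    (AntiIsotopic m m ↔ Isotopic m p5) ∧ (Isotopic m p5 ↔ Isotopic p1 p3) ∧
    (Isotopic p1 p3 ↔ Isotopic p2 p4) := by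
  have e13 := aux13 m p1 p3 p5 h1 h3 h5
  have e24 := aux24 m p2 p4 p5 h2 h4 h5
  refine ⟨?_, e13, e13.symm.trans e24⟩
  constructor
  · rintro ⟨α, β, γ, hα, hβ, hγ, h⟩
    refine ⟨β, α, γ, hβ, hα, hγ, fun x y => ?_⟩
    rw [h5]; exact h y x
  · rintro ⟨α, β, γ, hα, hβ, hγ, h⟩
    refine ⟨β, α, γ, hβ, hα, hγ, fun x y => ?_⟩
    have := h y x; rw [h5] at this; exact this
end

section
/- For a quasigroup Q the following are equivalent: (i) Q is anti-isotopic to Q₁; (ii) Q is anti-isotopic to Q₂; (iii) Q₁ is isotopic to Q₂. -/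
theorem stmt_9 {Q : Type*} (m p1 p2 : Q → Q → Q) (hq : IsQuasigroup m)
    (h1 : ∀ x y z, p1 x y = z ↔ m x z = y)
    (h2 : ∀ x y z, p2 x y = z ↔ m z y = x) :
    (AntiIsotopic m p1 ↔ AntiIsotopic m p2) ∧ (AntiIsotopic m p2 ↔ Isotopic p1 p2) := by
  -- Translate each statement into an equation purely about m.
  have hA : AntiIsotopic m p1 ↔ ∃ α β γ : Q → Q,
      Function.Bijective α ∧ Function.Bijective β ∧ Function.Bijective γ ∧
      ∀ x y, m (α x) (γ (m y x)) = β y := by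
    constructor
    · rintro ⟨α, β, γ, hα, hβ, hγ, h⟩
      exact ⟨α, β, γ, hα, hβ, hγ, fun x y => (h1 _ _ _).mp (h x y)⟩
    · rintro ⟨α, β, γ, hα, hβ, hγ, h⟩
      exact ⟨α, β, γ, hα, hβ, hγ, fun x y => (h1 _ _ _).mpr (h x y)⟩
  have hB : AntiIsotopic m p2 ↔ ∃ α β γ : Q → Q,
      Function.Bijective α ∧ Function.Bijective β ∧ Function.Bijective γ ∧
      ∀ x y, m (γ (m y x)) (β y) = α x := by
    constructor
    · rintro ⟨α, β, γ, hα, hβ, hγ, h⟩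
      exact ⟨α, β, γ, hα, hβ, hγ, fun x y => (h2 _ _ _).mp (h x y)⟩
    · rintro ⟨α, β, γ, hα, hβ, hγ, h⟩
      exact ⟨α, β, γ, hα, hβ, hγ, fun x y => (h2 _ _ _).mpr (h x y)⟩
  have hC : Isotopic p1 p2 ↔ ∃ a b c : Q → Q,
      Function.Bijective a ∧ Function.Bijective b ∧ Function.Bijective c ∧
      ∀ x y, m (c y) (b (m x y)) = a x := by
    constructor
    · rintro ⟨a, b, c, ha, hb, hc, h⟩
      refine ⟨a, b, c, ha, hb, hc, fun x y => ?_⟩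
      have t := (h2 _ _ _).mp (h x (m x y))
      rwa [(h1 x (m x y) y).mpr rfl] at t
    · rintro ⟨a, b, c, ha, hb, hc, h⟩
      refine ⟨a, b, c, ha, hb, hc, fun x y => ?_⟩
      apply (h2 _ _ _).mpr
      have hxy : m x (p1 x y) = y := (h1 x y _).mp rfl
      have t := h x (p1 x y)
      rwa [hxy] at t
  -- A' → B'
  have AtoB : (∃ α β γ : Q → Q,
      Function.Bijective α ∧ Function.Bijective β ∧ Function.Bijective γ ∧
      ∀ x y, m (α x) (γ (m y x)) = β y) →
      (∃ α β γ : Q → Q,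
      Function.Bijective α ∧ Function.Bijective β ∧ Function.Bijective γ ∧
      ∀ x y, m (γ (m y x)) (β y) = α x) := by
    rintro ⟨α, β, γ, hα, hβ, hγ, h⟩
    refine ⟨β ∘ α, γ ∘ β, α ∘ γ, hβ.comp hα, hγ.comp hβ, hα.comp hγ, fun x y => ?_⟩
    have t1 := h x y
    have t2 := h (γ (m y x)) (α x)
    rw [t1] at t2
    simpa [Function.comp] using t2
  -- B' → A'
  have BtoA : (∃ α β γ : Q → Q,
      Function.Bijective α ∧ Function.Bijective β ∧ Function.Bijective γ ∧
      ∀ x y, m (γ (m y x)) (β y) = α x) →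
      (∃ α β γ : Q → Q,
      Function.Bijective α ∧ Function.Bijective β ∧ Function.Bijective γ ∧
      ∀ x y, m (α x) (γ (m y x)) = β y) := by
    rintro ⟨α, β, γ, hα, hβ, hγ, h⟩
    refine ⟨γ ∘ α, α ∘ β, β ∘ γ, hγ.comp hα, hα.comp hβ, hβ.comp hγ, fun x y => ?_⟩
    have t1 := h x y
    have t2 := h (β y) (γ (m y x))
    rw [t1] at t2
    simpa [Function.comp] using t2
  -- A' ↔ C' (pure renaming)
  have AiffC : (∃ α β γ : Q → Q,
      Function.Bijective α ∧ Function.Bijective β ∧ Function.Bijective γ ∧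
      ∀ x y, m (α x) (γ (m y x)) = β y) ↔
      (∃ a b c : Q → Q,
      Function.Bijective a ∧ Function.Bijective b ∧ Function.Bijective c ∧
      ∀ x y, m (c y) (b (m x y)) = a x) := by
    constructor
    · rintro ⟨α, β, γ, hα, hβ, hγ, h⟩
      exact ⟨β, γ, α, hβ, hγ, hα, fun x y => h y x⟩
    · rintro ⟨a, b, c, ha, hb, hc, h⟩
      exact ⟨c, a, b, hc, ha, hb, fun x y => h y x⟩
  have hAB : AntiIsotopic m p1 ↔ AntiIsotopic m p2 :=
    hA.trans ((Iff.intro AtoB BtoA).trans hB.symm)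
  have hBC : AntiIsotopic m p2 ↔ Isotopic p1 p2 :=
    hB.trans (((Iff.intro BtoA AtoB).trans AiffC).trans hC.symm)
  exact ⟨hAB, hBC⟩
end

section
/- For a quasigroup Q the following are equivalent: (i) Q₁ is anti-isotopic to Q; (ii) Q₁ is anti-isotopic to Q₃; (iii) Q is isotopic to Q₃; (iv) Q₁ is isotopic to Q₅. -/
lemma iso_symm' {Q : Type*} {m₁ m₂ : Q → Q → Q} (h : Isotopic m₁ m₂) : Isotopic m₂ m₁ := by
  obtain ⟨α, β, γ, hα, hβ, hγ, h⟩ := h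
  let eα := Equiv.ofBijective α hα
  let eβ := Equiv.ofBijective β hβ
  let eγ := Equiv.ofBijective γ hγ
  refine ⟨eα.symm, eβ.symm, eγ.symm, eα.symm.bijective, eβ.symm.bijective, eγ.symm.bijective,
    fun x y => ?_⟩
  have := h (eα.symm x) (eβ.symm y)
  have hx : α (eα.symm x) = x := eα.apply_symm_apply x
  have hy : β (eβ.symm y) = y := eβ.apply_symm_apply y
  rw [hx, hy] at this
  rw [this]
  exact (eγ.symm_apply_apply _).symm

lemma anti_symm' {Q : Type*} {m₁ m₂ : Q → Q → Q} (h : AntiIsotopic m₁ m₂) : AntiIsotopic m₂ m₁ := by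
  obtain ⟨α, β, γ, hα, hβ, hγ, h⟩ := h
  let eα := Equiv.ofBijective α hα
  let eβ := Equiv.ofBijective β hβ
  let eγ := Equiv.ofBijective γ hγ
  refine ⟨eβ.symm, eα.symm, eγ.symm, eβ.symm.bijective, eα.symm.bijective, eγ.symm.bijective,
    fun x y => ?_⟩
  have := h (eα.symm y) (eβ.symm x)
  have hx : α (eα.symm y) = y := eα.apply_symm_apply y
  have hy : β (eβ.symm x) = x := eβ.apply_symm_apply x
  rw [hx, hy] at this
  rw [this]
  exact (eγ.symm_apply_apply _).symm

theorem stmt_10 {Q : Type*} (m p1 p3 p5 : Q → Q → Q) (hq : IsQuasigroup m)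
    (h1 : ∀ x y z, p1 x y = z ↔ m x z = y)
    (h3 : ∀ x y z, p3 x y = z ↔ m z x = y)
    (h5 : ∀ x y, p5 x y = m y x) :
    (AntiIsotopic p1 m ↔ AntiIsotopic p1 p3) ∧ (AntiIsotopic p1 p3 ↔ Isotopic m p3) ∧
    (Isotopic m p3 ↔ Isotopic p1 p5) := by
  have e1a : ∀ x y, m x (p1 x y) = y := fun x y => (h1 x y (p1 x y)).mp rfl
  have e3a : ∀ x y, m (p3 x y) x = y := fun x y => (h3 x y (p3 x y)).mp rfl
  -- (i) ↔ (ii)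
  have AB : AntiIsotopic p1 m ↔ AntiIsotopic p1 p3 := by
    constructor
    · rintro ⟨α, β, γ, hα, hβ, hγ, h⟩
      apply anti_symm'
      refine ⟨α, γ, β, hα, hγ, hβ, fun x y => ?_⟩
      have hp : p1 (p3 y x) x = y := by rw [h1]; exact e3a y x
      have hh := h x (p3 y x)
      rw [h1, hh, hp]
    · intro hB
      obtain ⟨a, b, c, ha, hb, hc, h⟩ := anti_symm' hB
      refine ⟨a, c, b, ha, hc, hb, fun x y => ?_⟩
      have hp : p3 (p1 y x) x = y := by rw [h3]; exact e1a y x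
      have hh := h x (p1 y x)
      rw [hp] at hh
      rw [h1] at hh
      exact hh
  -- (ii) ↔ (iii)
  have BC : AntiIsotopic p1 p3 ↔ Isotopic m p3 := by
    constructor
    · rintro ⟨α, β, γ, hα, hβ, hγ, h⟩
      apply iso_symm'
      refine ⟨γ, α, β, hγ, hα, hβ, fun x y => ?_⟩
      have hp : p1 (p3 x y) y = x := by rw [h1]; exact e3a x y
      have hh := h y (p3 x y)
      rw [hp] at hh
      rw [h3] at hh
      exact hh
    · intro hC
      obtain ⟨a, b, c, ha, hb, hc, h⟩ := iso_symm' hC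
      refine ⟨b, c, a, hb, hc, ha, fun x y => ?_⟩
      have hp : p3 (p1 y x) x = y := by rw [h3]; exact e1a y x
      have hh := h (p1 y x) x
      rw [hp] at hh
      rw [h3]
      exact hh
  -- (i) ↔ (iv)
  have AD : AntiIsotopic p1 m ↔ Isotopic p1 p5 := by
    constructor
    · rintro ⟨α, β, γ, hα, hβ, hγ, h⟩
      refine ⟨β, α, γ, hβ, hα, hγ, fun x y => ?_⟩
      rw [h5]
      exact h y x
    · rintro ⟨a, b, c, ha, hb, hc, h⟩
      refine ⟨b, a, c, hb, ha, hc, fun x y => ?_⟩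
      have hh := h y x
      rw [h5] at hh
      exact hh
  exact ⟨AB, BC, BC.symm.trans (AB.symm.trans AD)⟩
end

section
/- All parastrophes of a quasigroup Q are isotopic to Q if and only if Q is anti-isotopic to itself and Q is anti-isotopic to Qᵢ for some i ∈ {1,2,3,4}. -/
theorem stmt_13 {Q : Type*} (m p1 p2 p3 p4 p5 : Q → Q → Q) (hq : IsQuasigroup m)
    (h1 : ∀ x y z, p1 x y = z ↔ m x z = y)
    (h2 : ∀ x y z, p2 x y = z ↔ m z y = x)
    (h3 : ∀ x y z, p3 x y = z ↔ m z x = y)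
    (h4 : ∀ x y z, p4 x y = z ↔ m y z = x)
    (h5 : ∀ x y, p5 x y = m y x) :
    (Isotopic m p1 ∧ Isotopic m p2 ∧ Isotopic m p3 ∧ Isotopic m p4 ∧ Isotopic m p5) ↔
    (AntiIsotopic m m ∧
      (AntiIsotopic m p1 ∨ AntiIsotopic m p2 ∨ AntiIsotopic m p3 ∨ AntiIsotopic m p4)) := by
  constructor
  · rintro ⟨-, -, i3, -, i5⟩
    constructor
    · obtain ⟨α, β, γ, hα, hβ, hγ, h⟩ := i5
      refine ⟨β, α, γ, hβ, hα, hγ, fun x y => ?_⟩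
      have := h y x
      rw [h5] at this
      exact this
    · refine Or.inr (Or.inl ?_)
      obtain ⟨α, β, γ, hα, hβ, hγ, h⟩ := i3
      refine ⟨β, α, γ, hβ, hα, hγ, fun x y => ?_⟩
      exact (h2 _ _ _).mpr ((h3 _ _ _).mp (h y x))
  · rintro ⟨ham, hi⟩
    obtain ⟨α, β, γ, hα, hβ, hγ, hc⟩ := ham
    -- C-form: ∀ x y, m (α y) (β x) = γ (m x y)
    have hC : ∀ x y, m (α y) (β x) = γ (m x y) := fun x y => hc y x
    -- Derive the D-form: ∃ d₁ d₂ d₃ bijective, ∀ x y, m (d₃ (m x y)) (d₁ x) = d₂ y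
    have hDex : ∃ d₁ d₂ d₃ : Q → Q, Function.Bijective d₁ ∧ Function.Bijective d₂ ∧
        Function.Bijective d₃ ∧ ∀ x y, m (d₃ (m x y)) (d₁ x) = d₂ y := by
      rcases hi with h | h | h | h
      · -- from AntiIsotopic m p1 : E-form, then D = E ∘ E
        obtain ⟨a, b, g, ha, hb, hg, h0⟩ := h
        have hE : ∀ x y, m (a y) (g (m x y)) = b x := fun x y => (h1 _ _ _).mp (h0 y x)
        refine ⟨g ∘ b, b ∘ a, a ∘ g, hg.comp hb, hb.comp ha, ha.comp hg, fun x y => ?_⟩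
        have h' := hE (a y) (g (m x y))
        rw [hE x y] at h'
        exact h'
      · -- from AntiIsotopic m p2 : directly D-form
        obtain ⟨a, b, g, ha, hb, hg, h0⟩ := h
        exact ⟨b, a, g, hb, ha, hg, fun x y => (h2 _ _ _).mp (h0 y x)⟩
      · -- from AntiIsotopic m p3 : B-form, then D = B ∘ C
        obtain ⟨a, b, g, ha, hb, hg, h0⟩ := h
        have hB : ∀ x y, m (g (m x y)) (a y) = b x := fun x y => (h3 _ _ _).mp (h0 y x)
        refine ⟨a ∘ β, b ∘ α, g ∘ γ, ha.comp hβ, hb.comp hα, hg.comp hγ, fun x y => ?_⟩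
        have h' := hB (α y) (β x)
        rw [hC x y] at h'
        exact h'
      · -- from AntiIsotopic m p4 : A-form, then D = C ∘ A
        obtain ⟨a, b, g, ha, hb, hg, h0⟩ := h
        have hA : ∀ x y, m (b x) (g (m x y)) = a y := fun x y => (h4 _ _ _).mp (h0 y x)
        refine ⟨β ∘ b, γ ∘ a, α ∘ g, hβ.comp hb, hγ.comp ha, hα.comp hg, fun x y => ?_⟩
        have h' := hC (b x) (g (m x y))
        rw [hA x y] at h'
        exact h'
    obtain ⟨d₁, d₂, d₃, hd₁, hd₂, hd₃, hD⟩ := hDex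
    -- E-form = D ∘ D
    have hE : ∀ x y, m ((d₃ ∘ d₂) y) ((d₁ ∘ d₃) (m x y)) = (d₂ ∘ d₁) x := by
      intro x y
      have h' := hD (d₃ (m x y)) (d₁ x)
      rw [hD x y] at h'
      exact h'
    -- A-form = C ∘ D
    have hA : ∀ x y, m ((α ∘ d₁) x) ((β ∘ d₃) (m x y)) = (γ ∘ d₂) y := by
      intro x y
      have h' := hC (d₃ (m x y)) (d₁ x)
      rw [hD x y] at h'
      exact h'
    -- B-form = C ∘ E
    have hB : ∀ x y, m ((α ∘ d₁ ∘ d₃) (m x y)) ((β ∘ d₃ ∘ d₂) y) = (γ ∘ d₂ ∘ d₁) x := by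
      intro x y
      have h' := hC ((d₃ ∘ d₂) y) ((d₁ ∘ d₃) (m x y))
      rw [hE x y] at h'
      exact h'
    refine ⟨⟨α ∘ d₁, γ ∘ d₂, β ∘ d₃, hα.comp hd₁, hγ.comp hd₂, hβ.comp hd₃,
        fun x y => (h1 _ _ _).mpr (hA x y)⟩,
      ⟨γ ∘ d₂ ∘ d₁, β ∘ d₃ ∘ d₂, α ∘ d₁ ∘ d₃, hγ.comp (hd₂.comp hd₁),
        hβ.comp (hd₃.comp hd₂), hα.comp (hd₁.comp hd₃),
        fun x y => (h2 _ _ _).mpr (hB x y)⟩,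
      ⟨d₁, d₂, d₃, hd₁, hd₂, hd₃, fun x y => (h3 _ _ _).mpr (hD x y)⟩,
      ⟨d₂ ∘ d₁, d₃ ∘ d₂, d₁ ∘ d₃, hd₂.comp hd₁, hd₃.comp hd₂, hd₁.comp hd₃,
        fun x y => (h4 _ _ _).mpr (hE x y)⟩,
      ⟨β, α, γ, hβ, hα, hγ, fun x y => by rw [h5]; exact hC x y⟩⟩
end

section
/- The parastrophes of a quasigroup Q are pairwise non-isotopic (Q, Q₁, Q₂, Q₃, Q₄, Q₅ lie in six distinct isotopy classes) if and only if Q is not anti-isotopic to itself and Q is not anti-isotopic to Qᵢ for any i ∈ {1,2,3,4}. -/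
lemma iso_graph {Q : Type*} {m₁ m₂ : Q → Q → Q} :
    Isotopic m₁ m₂ ↔ ∃ α β γ : Q → Q, Function.Bijective α ∧ Function.Bijective β ∧
      Function.Bijective γ ∧ ∀ x y z, m₂ (α x) (β y) = γ z ↔ m₁ x y = z := by
  constructor
  · rintro ⟨α, β, γ, hα, hβ, hγ, h⟩
    exact ⟨α, β, γ, hα, hβ, hγ, fun x y z => by rw [h x y, hγ.injective.eq_iff]⟩
  · rintro ⟨α, β, γ, hα, hβ, hγ, h⟩
    exact ⟨α, β, γ, hα, hβ, hγ, fun x y => (h x y _).mpr rfl⟩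

lemma anti_graph {Q : Type*} {m₁ m₂ : Q → Q → Q} :
    AntiIsotopic m₁ m₂ ↔ ∃ α β γ : Q → Q, Function.Bijective α ∧ Function.Bijective β ∧
      Function.Bijective γ ∧ ∀ x y z, m₂ (α x) (β y) = γ z ↔ m₁ y x = z := by
  constructor
  · rintro ⟨α, β, γ, hα, hβ, hγ, h⟩
    exact ⟨α, β, γ, hα, hβ, hγ, fun x y z => by rw [h x y, hγ.injective.eq_iff]⟩
  · rintro ⟨α, β, γ, hα, hβ, hγ, h⟩
    exact ⟨α, β, γ, hα, hβ, hγ, fun x y => (h x y _).mpr rfl⟩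

theorem stmt_15 {Q : Type*} (m p1 p2 p3 p4 p5 : Q → Q → Q) (hq : IsQuasigroup m)
    (h1 : ∀ x y z, p1 x y = z ↔ m x z = y)
    (h2 : ∀ x y z, p2 x y = z ↔ m z y = x)
    (h3 : ∀ x y z, p3 x y = z ↔ m z x = y)
    (h4 : ∀ x y z, p4 x y = z ↔ m y z = x)
    (h5 : ∀ x y, p5 x y = m y x) :
    List.Pairwise (fun a b => ¬ Isotopic a b) [m, p1, p2, p3, p4, p5] ↔
    (¬ AntiIsotopic m m ∧ ¬ AntiIsotopic m p1 ∧ ¬ AntiIsotopic m p2 ∧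
      ¬ AntiIsotopic m p3 ∧ ¬ AntiIsotopic m p4) := by
  -- anti-isotopy equivalences
  have A0 : AntiIsotopic m m ↔ Isotopic m p5 := by
    rw [anti_graph, iso_graph]
    constructor
    · rintro ⟨α, β, γ, hα, hβ, hγ, H⟩
      refine ⟨β, α, γ, hβ, hα, hγ, fun u v w => ?_⟩
      rw [h5]; exact H v u w
    · rintro ⟨α, β, γ, hα, hβ, hγ, H⟩
      refine ⟨β, α, γ, hβ, hα, hγ, fun x y z => ?_⟩
      have := H y x z; rw [h5] at this; exact this
  have A1 : AntiIsotopic m p1 ↔ Isotopic m p4 := by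
    rw [anti_graph, iso_graph]
    constructor
    · rintro ⟨α, β, γ, hα, hβ, hγ, H⟩
      simp only [h1] at H
      refine ⟨β, α, γ, hβ, hα, hγ, fun u v w => ?_⟩
      rw [h4]; exact H v u w
    · rintro ⟨α, β, γ, hα, hβ, hγ, H⟩
      simp only [h4] at H
      refine ⟨β, α, γ, hβ, hα, hγ, fun x y z => ?_⟩
      rw [h1]; exact H y x z
  have A2 : AntiIsotopic m p2 ↔ Isotopic m p3 := by
    rw [anti_graph, iso_graph]
    constructor
    · rintro ⟨α, β, γ, hα, hβ, hγ, H⟩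
      simp only [h2] at H
      refine ⟨β, α, γ, hβ, hα, hγ, fun u v w => ?_⟩
      rw [h3]; exact H v u w
    · rintro ⟨α, β, γ, hα, hβ, hγ, H⟩
      simp only [h3] at H
      refine ⟨β, α, γ, hβ, hα, hγ, fun x y z => ?_⟩
      rw [h2]; exact H y x z
  have A3 : AntiIsotopic m p3 ↔ Isotopic m p2 := by
    rw [anti_graph, iso_graph]
    constructor
    · rintro ⟨α, β, γ, hα, hβ, hγ, H⟩
      simp only [h3] at H
      refine ⟨β, α, γ, hβ, hα, hγ, fun u v w => ?_⟩
      rw [h2]; exact H v u w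
    · rintro ⟨α, β, γ, hα, hβ, hγ, H⟩
      simp only [h2] at H
      refine ⟨β, α, γ, hβ, hα, hγ, fun x y z => ?_⟩
      rw [h3]; exact H y x z
  have A4 : AntiIsotopic m p4 ↔ Isotopic m p1 := by
    rw [anti_graph, iso_graph]
    constructor
    · rintro ⟨α, β, γ, hα, hβ, hγ, H⟩
      simp only [h4] at H
      refine ⟨β, α, γ, hβ, hα, hγ, fun u v w => ?_⟩
      rw [h1]; exact H v u w
    · rintro ⟨α, β, γ, hα, hβ, hγ, H⟩
      simp only [h1] at H
      refine ⟨β, α, γ, hβ, hα, hγ, fun x y z => ?_⟩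
      rw [h4]; exact H y x z
  -- reductions between parastrophes
  have R12 : Isotopic p1 p2 → Isotopic m p4 := by
    rw [iso_graph, iso_graph]
    rintro ⟨α, β, γ, hα, hβ, hγ, H⟩
    simp only [h1, h2] at H
    refine ⟨α, γ, β, hα, hγ, hβ, fun u v w => ?_⟩
    rw [h4]; exact H u w v
  have R13 : Isotopic p1 p3 → Isotopic m p5 := by
    rw [iso_graph, iso_graph]
    rintro ⟨α, β, γ, hα, hβ, hγ, H⟩
    simp only [h1, h3] at H
    refine ⟨α, γ, β, hα, hγ, hβ, fun u v w => ?_⟩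
    rw [h5]; exact H u w v
  have R14 : Isotopic p1 p4 → Isotopic m p2 := by
    rw [iso_graph, iso_graph]
    rintro ⟨α, β, γ, hα, hβ, hγ, H⟩
    simp only [h1, h4] at H
    refine ⟨α, γ, β, hα, hγ, hβ, fun u v w => ?_⟩
    rw [h2]; exact H u w v
  have R15 : Isotopic p1 p5 → Isotopic m p3 := by
    rw [iso_graph, iso_graph]
    rintro ⟨α, β, γ, hα, hβ, hγ, H⟩
    simp only [h1, h5] at H
    refine ⟨α, γ, β, hα, hγ, hβ, fun u v w => ?_⟩
    rw [h3]; exact H u w v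
  have R23 : Isotopic p2 p3 → Isotopic m p1 := by
    rw [iso_graph, iso_graph]
    rintro ⟨α, β, γ, hα, hβ, hγ, H⟩
    simp only [h2, h3] at H
    refine ⟨γ, β, α, hγ, hβ, hα, fun u v w => ?_⟩
    rw [h1]; exact H w v u
  have R24 : Isotopic p2 p4 → Isotopic m p5 := by
    rw [iso_graph, iso_graph]
    rintro ⟨α, β, γ, hα, hβ, hγ, H⟩
    simp only [h2, h4] at H
    refine ⟨γ, β, α, hγ, hβ, hα, fun u v w => ?_⟩
    rw [h5]; exact H w v u
  have R25 : Isotopic p2 p5 → Isotopic m p4 := by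
    rw [iso_graph, iso_graph]
    rintro ⟨α, β, γ, hα, hβ, hγ, H⟩
    simp only [h2, h5] at H
    refine ⟨γ, β, α, hγ, hβ, hα, fun u v w => ?_⟩
    rw [h4]; exact H w v u
  have R34 : Isotopic p3 p4 → Isotopic m p3 := by
    rw [iso_graph, iso_graph]
    rintro ⟨α, β, γ, hα, hβ, hγ, H⟩
    simp only [h3, h4] at H
    refine ⟨γ, α, β, hγ, hα, hβ, fun u v w => ?_⟩
    rw [h3]; exact H v w u
  have R35 : Isotopic p3 p5 → Isotopic m p2 := by
    rw [iso_graph, iso_graph]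
    rintro ⟨α, β, γ, hα, hβ, hγ, H⟩
    simp only [h3, h5] at H
    refine ⟨γ, α, β, hγ, hα, hβ, fun u v w => ?_⟩
    rw [h2]; exact H v w u
  have R45 : Isotopic p4 p5 → Isotopic m p1 := by
    rw [iso_graph, iso_graph]
    rintro ⟨α, β, γ, hα, hβ, hγ, H⟩
    simp only [h4, h5] at H
    refine ⟨β, γ, α, hβ, hγ, hα, fun u v w => ?_⟩
    rw [h1]; exact H w u v
  simp only [List.pairwise_cons, List.mem_cons, List.not_mem_nil, List.mem_singleton,
    forall_eq_or_imp, forall_eq, List.Pairwise.nil, and_true, false_implies, implies_true]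
  constructor
  · rintro ⟨⟨i1, i2, i3, i4, i5⟩, -⟩
    exact ⟨fun h => i5 (A0.mp h), fun h => i4 (A1.mp h), fun h => i3 (A2.mp h),
      fun h => i2 (A3.mp h), fun h => i1 (A4.mp h)⟩
  · rintro ⟨a0, a1, a2, a3, a4⟩
    have i1 : ¬ Isotopic m p1 := fun h => a4 (A4.mpr h)
    have i2 : ¬ Isotopic m p2 := fun h => a3 (A3.mpr h)
    have i3 : ¬ Isotopic m p3 := fun h => a2 (A2.mpr h)
    have i4 : ¬ Isotopic m p4 := fun h => a1 (A1.mpr h)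
    have i5 : ¬ Isotopic m p5 := fun h => a0 (A0.mpr h)
    exact ⟨⟨i1, i2, i3, i4, i5⟩, ⟨mt R12 i4, mt R13 i5, mt R14 i2, mt R15 i3⟩,
      ⟨mt R23 i1, mt R24 i5, mt R25 i4⟩, ⟨mt R34 i3, mt R35 i2⟩, mt R45 i1⟩
end

section
/- The number of pairwise non-isotopic parastrophes of a quasigroup (among Q, Q₁, Q₂, Q₃, Q₄, Q₅) is always 1, 2, 3, or 6. -/
section Aux

variable {Q : Type*}

lemma isotopic_refl (a : Q → Q → Q) : Isotopic a a :=
  ⟨id, id, id, Function.bijective_id, Function.bijective_id, Function.bijective_id,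
    fun _ _ => rfl⟩

lemma isotopic_symm {a b : Q → Q → Q} (h : Isotopic a b) : Isotopic b a := by
  obtain ⟨α, β, γ, hα, hβ, hγ, h⟩ := h
  let eα := Equiv.ofBijective α hα
  let eβ := Equiv.ofBijective β hβ
  let eγ := Equiv.ofBijective γ hγ
  refine ⟨eα.symm, eβ.symm, eγ.symm, eα.symm.bijective, eβ.symm.bijective,
    eγ.symm.bijective, fun x y => ?_⟩
  have h2 := h (eα.symm x) (eβ.symm y)
  rw [show α (eα.symm x) = x from eα.apply_symm_apply x,
    show β (eβ.symm y) = y from eβ.apply_symm_apply y] at h2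
  rw [h2]
  exact (eγ.symm_apply_apply _).symm

lemma isotopic_trans {a b c : Q → Q → Q} (h1 : Isotopic a b) (h2 : Isotopic b c) :
    Isotopic a c := by
  obtain ⟨α, β, γ, hα, hβ, hγ, h⟩ := h1
  obtain ⟨α', β', γ', hα', hβ', hγ', h'⟩ := h2
  exact ⟨α' ∘ α, β' ∘ β, γ' ∘ γ, hα'.comp hα, hβ'.comp hβ, hγ'.comp hγ,
    fun x y => by simp only [Function.comp_apply]; rw [h', h]⟩

lemma isotopic_transpose {a b : Q → Q → Q} (h : Isotopic a b) :
    Isotopic (fun x y => a y x) (fun x y => b y x) := by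
  obtain ⟨α, β, γ, hα, hβ, hγ, h⟩ := h
  exact ⟨β, α, γ, hβ, hα, hγ, fun x y => h y x⟩

lemma isotopic_ldiv {a b a' b' : Q → Q → Q}
    (ha : ∀ x y z, a' x y = z ↔ a x z = y) (hb : ∀ x y z, b' x y = z ↔ b x z = y)
    (h : Isotopic a b) : Isotopic a' b' := by
  obtain ⟨α, β, γ, hα, hβ, hγ, h⟩ := h
  refine ⟨α, γ, β, hα, hγ, hβ, fun x y => ?_⟩
  rw [hb, h]
  congr 1
  exact (ha x y (a' x y)).mp rfl

/-- The six parastrophes indexed by permutations of `Fin 3`. -/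
def qp (m p1 p2 p3 p4 p5 : Q → Q → Q) (σ : Equiv.Perm (Fin 3)) : Q → Q → Q :=
  if σ = 1 then m
  else if σ = Equiv.swap 1 2 then p1
  else if σ = Equiv.swap 0 2 then p2
  else if σ = Equiv.swap 0 1 * Equiv.swap 0 2 then p3
  else if σ = Equiv.swap 0 2 * Equiv.swap 0 1 then p4
  else p5

lemma perm3_cases (σ : Equiv.Perm (Fin 3)) :
    σ = 1 ∨ σ = Equiv.swap (1 : Fin 3) 2 ∨ σ = Equiv.swap (0 : Fin 3) 2 ∨
    σ = Equiv.swap (0 : Fin 3) 1 * Equiv.swap 0 2 ∨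
    σ = Equiv.swap (0 : Fin 3) 2 * Equiv.swap 0 1 ∨
    σ = Equiv.swap (0 : Fin 3) 1 := by
  revert σ; decide

end Aux

theorem stmt_16 {Q : Type*} (m p1 p2 p3 p4 p5 : Q → Q → Q) (hq : IsQuasigroup m)
    (h1 : ∀ x y z, p1 x y = z ↔ m x z = y)
    (h2 : ∀ x y z, p2 x y = z ↔ m z y = x)
    (h3 : ∀ x y z, p3 x y = z ↔ m z x = y)
    (h4 : ∀ x y z, p4 x y = z ↔ m y z = x)
    (h5 : ∀ x y, p5 x y = m y x) :
    Set.ncard {C : Set (Q → Q → Q) |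
        ∃ p ∈ ({m, p1, p2, p3, p4, p5} : Set (Q → Q → Q)), C = {g | Isotopic p g}}
      ∈ ({1, 2, 3, 6} : Set ℕ) := by
  classical
  set q : Equiv.Perm (Fin 3) → Q → Q → Q := qp m p1 p2 p3 p4 p5 with hqdef
  -- values of q
  have hv1 : q 1 = m := by simp [hqdef, qp]
  have hvA : q (Equiv.swap 1 2) = p1 := by
    simp [hqdef, qp, show (Equiv.swap 1 2 : Equiv.Perm (Fin 3)) ≠ 1 from by decide]
  have hvB : q (Equiv.swap 0 2) = p2 := by
    simp [hqdef, qp, show (Equiv.swap 0 2 : Equiv.Perm (Fin 3)) ≠ 1 from by decide,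
      show (Equiv.swap 0 2 : Equiv.Perm (Fin 3)) ≠ Equiv.swap 1 2 from by decide]
  have hvC : q (Equiv.swap 0 1 * Equiv.swap 0 2) = p3 := by
    simp [hqdef, qp,
      show (Equiv.swap 0 1 * Equiv.swap 0 2 : Equiv.Perm (Fin 3)) ≠ 1 from by decide,
      show (Equiv.swap 0 1 * Equiv.swap 0 2 : Equiv.Perm (Fin 3)) ≠ Equiv.swap 1 2 from by decide,
      show (Equiv.swap 0 1 * Equiv.swap 0 2 : Equiv.Perm (Fin 3)) ≠ Equiv.swap 0 2 from by decide]
  have hvD : q (Equiv.swap 0 2 * Equiv.swap 0 1) = p4 := by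
    simp [hqdef, qp,
      show (Equiv.swap 0 2 * Equiv.swap 0 1 : Equiv.Perm (Fin 3)) ≠ 1 from by decide,
      show (Equiv.swap 0 2 * Equiv.swap 0 1 : Equiv.Perm (Fin 3)) ≠ Equiv.swap 1 2 from by decide,
      show (Equiv.swap 0 2 * Equiv.swap 0 1 : Equiv.Perm (Fin 3)) ≠ Equiv.swap 0 2 from by decide,
      show (Equiv.swap 0 2 * Equiv.swap 0 1 : Equiv.Perm (Fin 3)) ≠
        Equiv.swap 0 1 * Equiv.swap 0 2 from by decide]
  have hvE : q (Equiv.swap 0 1) = p5 := by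
    simp [hqdef, qp, show (Equiv.swap 0 1 : Equiv.Perm (Fin 3)) ≠ 1 from by decide,
      show (Equiv.swap 0 1 : Equiv.Perm (Fin 3)) ≠ Equiv.swap 1 2 from by decide,
      show (Equiv.swap 0 1 : Equiv.Perm (Fin 3)) ≠ Equiv.swap 0 2 from by decide,
      show (Equiv.swap 0 1 : Equiv.Perm (Fin 3)) ≠ Equiv.swap 0 1 * Equiv.swap 0 2 from by decide,
      show (Equiv.swap 0 1 : Equiv.Perm (Fin 3)) ≠ Equiv.swap 0 2 * Equiv.swap 0 1 from by decide]
  -- master lemma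
  have hM : ∀ (σ : Equiv.Perm (Fin 3)) (x y z : Q),
      q σ x y = z ↔ m (![x, y, z] (σ 0)) (![x, y, z] (σ 1)) = ![x, y, z] (σ 2) := by
    intro σ x y z
    rcases perm3_cases σ with rfl | rfl | rfl | rfl | rfl | rfl
    · rw [hv1]; simp
    · rw [hvA]
      simp [h1, show (Equiv.swap 1 2 : Equiv.Perm (Fin 3)) 0 = 0 from by decide,
        show (Equiv.swap 1 2 : Equiv.Perm (Fin 3)) 1 = 2 from by decide,
        show (Equiv.swap 1 2 : Equiv.Perm (Fin 3)) 2 = 1 from by decide]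
    · rw [hvB]
      simp [h2, show (Equiv.swap 0 2 : Equiv.Perm (Fin 3)) 0 = 2 from by decide,
        show (Equiv.swap 0 2 : Equiv.Perm (Fin 3)) 1 = 1 from by decide,
        show (Equiv.swap 0 2 : Equiv.Perm (Fin 3)) 2 = 0 from by decide]
    · rw [hvC]
      simp [h3, show (Equiv.swap 0 1 * Equiv.swap 0 2 : Equiv.Perm (Fin 3)) 0 = 2 from by decide,
        show (Equiv.swap 0 1 * Equiv.swap 0 2 : Equiv.Perm (Fin 3)) 1 = 0 from by decide,
        show (Equiv.swap 0 1 * Equiv.swap 0 2 : Equiv.Perm (Fin 3)) 2 = 1 from by decide]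
    · rw [hvD]
      simp [h4, show (Equiv.swap 0 2 * Equiv.swap 0 1 : Equiv.Perm (Fin 3)) 0 = 1 from by decide,
        show (Equiv.swap 0 2 * Equiv.swap 0 1 : Equiv.Perm (Fin 3)) 1 = 2 from by decide,
        show (Equiv.swap 0 2 * Equiv.swap 0 1 : Equiv.Perm (Fin 3)) 2 = 0 from by decide]
    · rw [hvE]
      simp [h5, show (Equiv.swap 0 1 : Equiv.Perm (Fin 3)) 0 = 1 from by decide,
        show (Equiv.swap 0 1 : Equiv.Perm (Fin 3)) 1 = 0 from by decide,
        show (Equiv.swap 0 1 : Equiv.Perm (Fin 3)) 2 = 2 from by decide]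
  -- transpose law
  have L1 : forall (σ : Equiv.Perm (Fin 3)) (x y : Q),
      q (Equiv.swap 0 1 * σ) x y = q σ y x := by
    intro σ x y
    have key : ∀ z, q (Equiv.swap 0 1 * σ) x y = z ↔ q σ y x = z := by
      intro z
      rw [hM, hM]
      have hv : ∀ j : Fin 3, (![y, x, z] : Fin 3 → Q) j = ![x, y, z] (Equiv.swap 0 1 j) := by
        intro j
        fin_cases j <;>
          simp [Equiv.swap_apply_left, Equiv.swap_apply_right, Equiv.swap_apply_of_ne_of_ne]
      simp only [Equiv.Perm.mul_apply, hv]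
    exact (key (q σ y x)).mpr rfl
  -- left-division law
  have L2 : ∀ (σ : Equiv.Perm (Fin 3)) (x y z : Q),
      q (Equiv.swap 1 2 * σ) x y = z ↔ q σ x z = y := by
    intro σ x y z
    rw [hM, hM]
    have hv : ∀ j : Fin 3, (![x, z, y] : Fin 3 → Q) j = ![x, y, z] (Equiv.swap 1 2 j) := by
      intro j
      fin_cases j <;>
        simp [Equiv.swap_apply_left, Equiv.swap_apply_right, Equiv.swap_apply_of_ne_of_ne]
    simp only [Equiv.Perm.mul_apply, hv]
  -- invariance of isotopy under left translation
  have hP01 : ∀ σ τ : Equiv.Perm (Fin 3), Isotopic (q σ) (q τ) →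
      Isotopic (q (Equiv.swap 0 1 * σ)) (q (Equiv.swap 0 1 * τ)) := by
    intro σ τ h
    have e : ∀ ρ : Equiv.Perm (Fin 3), q (Equiv.swap 0 1 * ρ) = fun x y => q ρ y x := by
      intro ρ; funext x y; exact L1 ρ x y
    rw [e σ, e τ]
    exact isotopic_transpose h
  have hP12 : ∀ σ τ : Equiv.Perm (Fin 3), Isotopic (q σ) (q τ) →
      Isotopic (q (Equiv.swap 1 2 * σ)) (q (Equiv.swap 1 2 * τ)) := by
    intro σ τ h
    exact isotopic_ldiv (L2 σ) (L2 τ) h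
  have hPmul : ∀ a b : Equiv.Perm (Fin 3),
      (∀ σ τ : Equiv.Perm (Fin 3), Isotopic (q σ) (q τ) →
        Isotopic (q (a * σ)) (q (a * τ))) →
      (∀ σ τ : Equiv.Perm (Fin 3), Isotopic (q σ) (q τ) →
        Isotopic (q (b * σ)) (q (b * τ))) →
      ∀ σ τ : Equiv.Perm (Fin 3), Isotopic (q σ) (q τ) →
        Isotopic (q (a * b * σ)) (q (a * b * τ)) := by
    intro a b ha hb σ τ h
    rw [mul_assoc, mul_assoc]
    exact ha _ _ (hb _ _ h)
  have hP02 : ∀ σ τ : Equiv.Perm (Fin 3), Isotopic (q σ) (q τ) →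
      Isotopic (q (Equiv.swap 0 2 * σ)) (q (Equiv.swap 0 2 * τ)) := by
    rw [show (Equiv.swap 0 2 : Equiv.Perm (Fin 3)) =
      Equiv.swap 0 1 * Equiv.swap 1 2 * Equiv.swap 0 1 from by decide]
    exact hPmul _ _ (hPmul _ _ hP01 hP12) hP01
  have hPall : ∀ g σ τ : Equiv.Perm (Fin 3), Isotopic (q σ) (q τ) →
      Isotopic (q (g * σ)) (q (g * τ)) := by
    intro g
    rcases perm3_cases g with rfl | rfl | rfl | rfl | rfl | rfl
    · intro σ τ h; simpa using h
    · exact hP12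
    · exact hP02
    · exact hPmul _ _ hP01 hP02
    · exact hPmul _ _ hP02 hP01
    · exact hP01
  -- the subgroup of parastrophes isotopic to m
  let H : Subgroup (Equiv.Perm (Fin 3)) :=
    { carrier := {g : Equiv.Perm (Fin 3) | Isotopic (q 1) (q g)}
      one_mem' := isotopic_refl _
      mul_mem' := by
        intro a b ha hb
        refine isotopic_trans ha ?_
        have := hPall a 1 b hb
        simpa using this
      inv_mem' := by
        intro a ha
        have := hPall a⁻¹ 1 a ha
        simp only [mul_one, inv_mul_cancel] at this
        exact isotopic_symm this }
  -- class map
  set cls : Equiv.Perm (Fin 3) → Set (Q → Q → Q) := fun σ => {g | Isotopic (q σ) g} with hcls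
  have clsEq : ∀ σ τ : Equiv.Perm (Fin 3), cls σ = cls τ ↔ Isotopic (q σ) (q τ) := by
    intro σ τ
    constructor
    · intro h
      have hmem : q τ ∈ cls τ := isotopic_refl _
      rw [← h] at hmem
      exact hmem
    · intro h
      ext g
      exact ⟨fun hg => isotopic_trans (isotopic_symm h) hg, fun hg => isotopic_trans h hg⟩
  have relTrans : ∀ σ τ : Equiv.Perm (Fin 3),
      Isotopic (q σ) (q τ) ↔ Isotopic (q 1) (q (σ⁻¹ * τ)) := by
    intro σ τ
    constructor
    · intro h
      have := hPall σ⁻¹ σ τ h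
      simpa using this
    · intro h
      have := hPall σ 1 (σ⁻¹ * τ) h
      simpa using this
  -- descend to the quotient
  let cls' : Equiv.Perm (Fin 3) ⧸ H → Set (Q → Q → Q) := Quotient.lift cls (by
    intro a b hab
    have hab' : a⁻¹ * b ∈ H := QuotientGroup.leftRel_apply.mp hab
    exact (clsEq a b).mpr ((relTrans a b).mpr hab'))
  have hinj : Function.Injective cls' := by
    intro x y
    refine Quotient.inductionOn₂ x y ?_
    intro a b h
    have h' : cls a = cls b := h
    exact Quotient.sound (QuotientGroup.leftRel_apply.mpr ((relTrans a b).mp ((clsEq a b).mp h')))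
  -- the target set equals the range of cls'
  have hset : {C : Set (Q → Q → Q) |
      ∃ p ∈ ({m, p1, p2, p3, p4, p5} : Set (Q → Q → Q)), C = {g | Isotopic p g}}
      = Set.range cls' := by
    ext C
    simp only [Set.mem_setOf_eq, Set.mem_range, Set.mem_insert_iff, Set.mem_singleton_iff]
    constructor
    · rintro ⟨p, hp, rfl⟩
      rcases hp with rfl | rfl | rfl | rfl | rfl | rfl
      · exact ⟨QuotientGroup.mk 1, by show cls _ = _; rw [hcls]; simp only [hv1]⟩
      · exact ⟨QuotientGroup.mk (Equiv.swap 1 2), by show cls _ = _; rw [hcls]; simp only [hvA]⟩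
      · exact ⟨QuotientGroup.mk (Equiv.swap 0 2), by show cls _ = _; rw [hcls]; simp only [hvB]⟩
      · exact ⟨QuotientGroup.mk (Equiv.swap 0 1 * Equiv.swap 0 2),
          by show cls _ = _; rw [hcls]; simp only [hvC]⟩
      · exact ⟨QuotientGroup.mk (Equiv.swap 0 2 * Equiv.swap 0 1),
          by show cls _ = _; rw [hcls]; simp only [hvD]⟩
      · exact ⟨QuotientGroup.mk (Equiv.swap 0 1), by show cls _ = _; rw [hcls]; simp only [hvE]⟩
    · rintro ⟨x, rfl⟩
      refine Quotient.inductionOn x ?_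
      intro σ
      refine ⟨q σ, ?_, rfl⟩
      rcases perm3_cases σ with rfl | rfl | rfl | rfl | rfl | rfl
      · rw [hv1]; tauto
      · rw [hvA]; tauto
      · rw [hvB]; tauto
      · rw [hvC]; tauto
      · rw [hvD]; tauto
      · rw [hvE]; tauto
  rw [hset]
  -- counting
  have hcard : (Set.range cls').ncard = H.index := by
    rw [← Nat.card_coe_set_eq, Nat.card_range_of_injective hinj]
    rfl
  rw [hcard]
  have hdvd : H.index ∣ 6 := by
    have hd := H.index_dvd_card
    rwa [show Nat.card (Equiv.Perm (Fin 3)) = 6 from by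
      simp [Nat.card_eq_fintype_card, Fintype.card_perm]; rfl] at hd
  have hle : H.index ≤ 6 := Nat.le_of_dvd (by norm_num) hdvd
  simp only [Set.mem_insert_iff, Set.mem_singleton_iff]
  generalize hgen : H.index = k at hdvd hle ⊢
  interval_cases k <;> revert hdvd <;> decide
end

section
/- If a quasigroup Q is isotopic to a group (G,∘) on the same underlying set, then all parastrophes of Q are isotopic to Q. -/
theorem stmt_18 {Q : Type*} [Group Q] (m p1 p2 p3 p4 p5 : Q → Q → Q) (hq : IsQuasigroup m)
    (h1 : ∀ x y z, p1 x y = z ↔ m x z = y)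
    (h2 : ∀ x y z, p2 x y = z ↔ m z y = x)
    (h3 : ∀ x y z, p3 x y = z ↔ m z x = y)
    (h4 : ∀ x y z, p4 x y = z ↔ m y z = x)
    (h5 : ∀ x y, p5 x y = m y x)
    (hiso : Isotopic m (fun x y => x * y)) :
    Isotopic m p1 ∧ Isotopic m p2 ∧ Isotopic m p3 ∧ Isotopic m p4 ∧ Isotopic m p5 := by
  obtain ⟨α, β, γ, hα, hβ, hγ, hm⟩ := hiso
  simp only at hm
  let eα := Equiv.ofBijective α hα
  let eβ := Equiv.ofBijective β hβ
  let eγ := Equiv.ofBijective γ hγ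
  have haα : ∀ z, α (eα.symm z) = z := fun z => eα.apply_symm_apply z
  have haβ : ∀ z, β (eβ.symm z) = z := fun z => eβ.apply_symm_apply z
  have haγ : ∀ z, γ (eγ.symm z) = z := fun z => eγ.apply_symm_apply z
  have hinv : Function.Bijective (fun z : Q => z⁻¹) := (Equiv.inv Q).bijective
  refine ⟨?_, ?_, ?_, ?_, ?_⟩
  · -- p1 : m x z = y ; A = α⁻¹∘inv∘α, B = γ⁻¹∘β, C = β⁻¹∘γ
    refine ⟨fun x => eα.symm (α x)⁻¹, fun y => eγ.symm (β y), fun t => eβ.symm (γ t),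
      eα.symm.bijective.comp (hinv.comp hα), eγ.symm.bijective.comp hβ,
      eβ.symm.bijective.comp hγ, fun x y => ?_⟩
    rw [h1]
    apply hγ.injective
    rw [← hm, haα, haβ, haγ, ← hm]
    group
  · -- p2 : m z y = x ; A = γ⁻¹∘α, B = β⁻¹∘inv∘β, C = α⁻¹∘γ
    refine ⟨fun x => eγ.symm (α x), fun y => eβ.symm (β y)⁻¹, fun t => eα.symm (γ t),
      eγ.symm.bijective.comp hα, eβ.symm.bijective.comp (hinv.comp hβ),
      eα.symm.bijective.comp hγ, fun x y => ?_⟩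
    rw [h2]
    apply hγ.injective
    rw [← hm, haα, haβ, haγ, ← hm]
    group
  · -- p3 : m z x = y ; A = β⁻¹∘α, B = γ⁻¹∘inv∘β, C = α⁻¹∘inv∘γ
    refine ⟨fun x => eβ.symm (α x), fun y => eγ.symm (β y)⁻¹, fun t => eα.symm (γ t)⁻¹,
      eβ.symm.bijective.comp hα, eγ.symm.bijective.comp (hinv.comp hβ),
      eα.symm.bijective.comp (hinv.comp hγ), fun x y => ?_⟩
    rw [h3]
    apply hγ.injective
    rw [← hm, haα, haβ, haγ, ← hm]
    group
  · -- p4 : m y z = x ; A = γ⁻¹∘inv∘α, B = α⁻¹∘β, C = β⁻¹∘inv∘γ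
    refine ⟨fun x => eγ.symm (α x)⁻¹, fun y => eα.symm (β y), fun t => eβ.symm (γ t)⁻¹,
      eγ.symm.bijective.comp (hinv.comp hα), eα.symm.bijective.comp hβ,
      eβ.symm.bijective.comp (hinv.comp hγ), fun x y => ?_⟩
    rw [h4]
    apply hγ.injective
    rw [← hm, haα, haβ, haγ, ← hm]
    group
  · -- p5 : flip ; A = β⁻¹∘inv∘α, B = α⁻¹∘inv∘β, C = γ⁻¹∘inv∘γ
    refine ⟨fun x => eβ.symm (α x)⁻¹, fun y => eα.symm (β y)⁻¹, fun t => eγ.symm (γ t)⁻¹,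
      eβ.symm.bijective.comp (hinv.comp hα), eα.symm.bijective.comp (hinv.comp hβ),
      eγ.symm.bijective.comp (hinv.comp hγ), fun x y => ?_⟩
    rw [h5]
    apply hγ.injective
    rw [← hm, haα, haβ, haγ, ← hm]
    group
end
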